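/- arXiv:0704.1888 — 3 statements merged into one kernel-verified Lean document; each statement's English description precedes it below -/
import Mathlib

section
/- Let q ≠ 0 with [n]_q! ≠ 0, and let μ : H_{n,q} → End(M) be any representation of the Hecke algebra on a vector space M. Then the image of the q-symmetrizer satisfies Im(μ(X_n)) = ⋂_{i=1}^{n-1} Im(μ(T_i) + 1). -/
/-!
STATEMENT 3: Let `q ≠ 0` with `[n]_q! ≠ 0`, and let `μ : H_{n,q} → End(M)` be any
representation of the Hecke algebra on a vector space `M`.  Then the image of the
`q`-symmetrizer satisfies `Im(μ(X_n)) = ⋂_{i=1}^{n-1} Im(μ(T_i) + 1)`.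

The Hecke algebra is presented by its standard basis `{T_σ}` with `T_1 = 1` and the usual
multiplication rule; `X_n = (1/[n]_q!) Σ_σ T_σ`, and the Coxeter length of `σ ∈ S_n` is its
inversion number.
-/

open Finset

/-- The Coxeter length of a permutation in `S_n` = its number of inversions. -/
def coxLen {n : ℕ} (σ : Equiv.Perm (Fin n)) : ℕ :=
  ((univ : Finset (Fin n × Fin n)).filter fun x => x.1 < x.2 ∧ σ x.2 < σ x.1).card

/-- The adjacent transposition `σ_i = (i, i+1)` in `S_n`. -/
def adjSwap {n : ℕ} (i : ℕ) (hi : i + 1 < n) : Equiv.Perm (Fin n) :=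
  Equiv.swap ⟨i, Nat.lt_of_succ_lt hi⟩ ⟨i + 1, hi⟩


/-
Put `S = ∑_σ T_σ`. The multiplication rule gives `T_σ T_i = T_{σ s_i}` whenever the length goes
up, and then also `T_i T_σ = T_{s_i σ}` (prepend `s_i` to a reduced word of `σ`). Pairing `σ` with
`s_i σ` therefore factors `S = (T_i + 1) Y_i`, so `Im μ(X_n) ⊆ Im(μ(T_i) + 1)`.

Conversely, `(T_i + 1)(T_i - q) = 0` makes `T_i` act by `q` on `Im(μ(T_i) + 1)`, so on the
intersection every `T_σ` acts by `q^ℓ(σ)` and `S` acts by the Poincaré polynomial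
`∑_σ q^ℓ(σ) = [n]_q!`. The latter is computed by writing a permutation of `Fin (n + 1)` as its
value `p` at `0` together with a permutation of `Fin n`: the inversions through `0` number `p`.
Hence `X_n` fixes every vector of the intersection.
-/

open Equiv

section CoxeterLength

variable {n : ℕ}

lemma adjSwap_apply_self (i : ℕ) (hi : i + 1 < n) (a : Fin n) :
    adjSwap i hi (adjSwap i hi a) = a :=
  swap_apply_self _ _ _

lemma adjSwap_mul_self (i : ℕ) (hi : i + 1 < n) : adjSwap i hi * adjSwap i hi = 1 :=
  swap_mul_self _ _

lemma adjSwap_inv (i : ℕ) (hi : i + 1 < n) : (adjSwap i hi)⁻¹ = adjSwap i hi :=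
  swap_inv _ _

lemma adjSwap_lt_adjSwap_iff (i : ℕ) (hi : i + 1 < n) {a b : Fin n}
    (h₁ : ¬((a : ℕ) = i ∧ (b : ℕ) = i + 1)) (h₂ : ¬((a : ℕ) = i + 1 ∧ (b : ℕ) = i)) :
    adjSwap i hi a < adjSwap i hi b ↔ a < b := by
  unfold adjSwap
  rw [swap_apply_def, swap_apply_def]
  split_ifs <;> simp only [Fin.ext_iff, Fin.lt_def] at * <;> omega

lemma coxLen_eq_sum (σ : Perm (Fin n)) :
    coxLen σ = ∑ x : Fin n × Fin n, if x.1 < x.2 ∧ σ x.2 < σ x.1 then 1 else 0 :=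
  Finset.card_filter _ _

lemma coxLen_one : coxLen (1 : Perm (Fin n)) = 0 := by
  rw [coxLen_eq_sum]
  exact Finset.sum_eq_zero fun x _ => if_neg fun h => lt_asymm h.1 h.2

lemma coxLen_inv (σ : Perm (Fin n)) : coxLen σ⁻¹ = coxLen σ := by
  rw [coxLen_eq_sum, coxLen_eq_sum]
  refine Fintype.sum_equiv ((σ.symm.prodCongr σ.symm).trans (Equiv.prodComm _ _)) _ _
    fun x => ?_
  simp [and_comm]

/-- After reindexing by `adjSwap i` on both coordinates, the inversion indicators of `σ` and of
`σ * adjSwap i` differ only at the pair `(i + 1, i)`. -/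
lemma coxLen_mul_adjSwap_of_lt (σ : Perm (Fin n)) (i : ℕ) (hi : i + 1 < n)
    (h : σ ⟨i, Nat.lt_of_succ_lt hi⟩ < σ ⟨i + 1, hi⟩) :
    coxLen (σ * adjSwap i hi) = coxLen σ + 1 := by
  set s := adjSwap i hi
  set f : Fin n × Fin n → ℕ := fun x => if s x.1 < s x.2 ∧ σ x.2 < σ x.1 then 1 else 0
  set g : Fin n × Fin n → ℕ := fun x => if x.1 < x.2 ∧ σ x.2 < σ x.1 then 1 else 0
  set x₀ : Fin n × Fin n := (⟨i + 1, hi⟩, ⟨i, Nat.lt_of_succ_lt hi⟩)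
  have hreindex : coxLen (σ * s) = ∑ x, f x := by
    rw [coxLen_eq_sum]
    refine (Fintype.sum_equiv (s.prodCongr s) _ _ fun x => ?_).symm
    simp [f, s, adjSwap_apply_self]
  have hf : f x₀ = 1 := by simp [f, x₀, s, adjSwap, h]
  have hg : g x₀ = 0 := by simp [g, x₀]
  have hfg : ∀ x ∈ ({x₀}ᶜ : Finset _), f x = g x := by
    rintro ⟨a, b⟩ hx
    simp only [Finset.mem_compl, Finset.mem_singleton, x₀, Prod.mk.injEq, Fin.ext_iff] at hx
    by_cases hab : (a : ℕ) = i ∧ (b : ℕ) = i + 1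
    · have ha : a = ⟨i, Nat.lt_of_succ_lt hi⟩ := Fin.ext hab.1
      have hb : b = ⟨i + 1, hi⟩ := Fin.ext hab.2
      simp [f, g, ha, hb, lt_asymm h]
    · simp only [f, g, s, adjSwap_lt_adjSwap_iff i hi hab hx]
  rw [hreindex, coxLen_eq_sum]
  change ∑ x, f x = ∑ x, g x + 1
  rw [Fintype.sum_eq_add_sum_compl x₀, Fintype.sum_eq_add_sum_compl x₀,
    hf, hg, Finset.sum_congr rfl hfg]
  ring

lemma coxLen_mul_adjSwap (σ : Perm (Fin n)) (i : ℕ) (hi : i + 1 < n) :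
    coxLen (σ * adjSwap i hi) = coxLen σ + 1 ∨ coxLen σ = coxLen (σ * adjSwap i hi) + 1 := by
  have hne : σ ⟨i, Nat.lt_of_succ_lt hi⟩ ≠ σ ⟨i + 1, hi⟩ := σ.injective.ne (by simp)
  rcases hne.lt_or_gt with h | h
  · exact .inl (coxLen_mul_adjSwap_of_lt σ i hi h)
  · right
    simpa [mul_assoc, adjSwap_mul_self] using
      coxLen_mul_adjSwap_of_lt (σ * adjSwap i hi) i hi (by simpa [adjSwap] using h)

lemma coxLen_adjSwap_mul (σ : Perm (Fin n)) (i : ℕ) (hi : i + 1 < n) :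
    coxLen (adjSwap i hi * σ) = coxLen σ + 1 ∨ coxLen σ = coxLen (adjSwap i hi * σ) + 1 := by
  have h := coxLen_mul_adjSwap σ⁻¹ i hi
  rwa [← adjSwap_inv, ← mul_inv_rev, coxLen_inv, coxLen_inv] at h

lemma eq_one_of_forall_apply_le_apply_succ (σ : Perm (Fin n))
    (h : ∀ (i : ℕ) (hi : i + 1 < n), σ ⟨i, Nat.lt_of_succ_lt hi⟩ ≤ σ ⟨i + 1, hi⟩) : σ = 1 := by
  cases n with
  | zero => exact Subsingleton.elim _ _
  | succ m =>
    have hmono : StrictMono σ :=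
      (Fin.monotone_iff_le_succ.2 fun j => h j (by omega)).strictMono_of_injective σ.injective
    exact DFunLike.coe_injective <|
      (hmono.range_inj strictMono_id).1 (by simp [σ.surjective.range_eq])

theorem coxLen_induction {P : Perm (Fin n) → Prop} (one : P 1)
    (mul_adjSwap : ∀ σ (i : ℕ) (hi : i + 1 < n),
      coxLen (σ * adjSwap i hi) = coxLen σ + 1 → P σ → P (σ * adjSwap i hi))
    (σ : Perm (Fin n)) : P σ := by
  induction hσ : coxLen σ using Nat.strong_induction_on generalizing σ with
  | _ N ih =>
  by_cases hdesc : ∃ (i : ℕ) (hi : i + 1 < n), σ ⟨i + 1, hi⟩ < σ ⟨i, Nat.lt_of_succ_lt hi⟩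
  · obtain ⟨i, hi, h⟩ := hdesc
    set τ := σ * adjSwap i hi
    have hτ : τ * adjSwap i hi = σ := by simp [τ, mul_assoc, adjSwap_mul_self]
    have hlen : coxLen (τ * adjSwap i hi) = coxLen τ + 1 :=
      coxLen_mul_adjSwap_of_lt τ i hi (by simpa [τ, adjSwap] using h)
    rw [← hτ] at hσ ⊢
    exact mul_adjSwap τ i hi hlen (ih _ (by omega) τ rfl)
  · push Not at hdesc
    rw [eq_one_of_forall_apply_le_apply_succ σ hdesc]
    exact one

end CoxeterLength

section PoincarePolynomial

variable {n : ℕ}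

def extendPerm (p : Fin (n + 1)) (τ : Perm (Fin n)) : Perm (Fin (n + 1)) :=
  ((finSuccEquiv n).trans (optionCongr τ)).trans (finSuccEquiv' p).symm

@[simp]
lemma extendPerm_zero (p : Fin (n + 1)) (τ : Perm (Fin n)) : extendPerm p τ 0 = p := by
  simp [extendPerm, finSuccEquiv'_symm_none]

@[simp]
lemma extendPerm_succ (p : Fin (n + 1)) (τ : Perm (Fin n)) (j : Fin n) :
    extendPerm p τ j.succ = p.succAbove (τ j) := by
  simp [extendPerm, finSuccEquiv'_symm_some]

lemma bijective_extendPerm :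
    Function.Bijective fun x : Fin (n + 1) × Perm (Fin n) => extendPerm x.1 x.2 := by
  rw [Fintype.bijective_iff_injective_and_card]
  refine ⟨fun ⟨p, τ⟩ ⟨p', τ'⟩ h => ?_, by simp [Fintype.card_perm, Nat.factorial_succ]⟩
  have hp : p = p' := by simpa using DFunLike.congr_fun h 0
  subst hp
  have hτ : τ = τ' := Equiv.ext fun j =>
    Fin.succAbove_right_injective (p := p) (by simpa using DFunLike.congr_fun h j.succ)
  rw [hτ]

lemma coxLen_extendPerm (p : Fin (n + 1)) (τ : Perm (Fin n)) :
    coxLen (extendPerm p τ) = p + coxLen τ := by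
  have hzero : (∑ j : Fin n, if (τ j).castSucc < p then 1 else 0) = (p : ℕ) := by
    rw [Fintype.sum_equiv τ _ (fun y => if y.castSucc < p then 1 else 0) fun _ => rfl,
      ← Finset.card_filter]
    simpa [Fin.lt_def, min_eq_right (Nat.lt_succ_iff.1 p.2)] using
      Fin.card_filter_val_lt (n := n) (m := p)
  rw [coxLen_eq_sum, coxLen_eq_sum, Fintype.sum_prod_type, Fintype.sum_prod_type]
  simp only [Fin.sum_univ_succ, extendPerm_zero, extendPerm_succ, Fin.succ_pos, Fin.not_lt_zero,
    Fin.succ_lt_succ_iff, false_and, true_and, if_false, Fin.succAbove_lt_succAbove_iff,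
    Fin.succAbove_lt_iff_castSucc_lt, zero_add, hzero]

lemma sum_pow_coxLen {k : Type*} [CommSemiring k] (q : k) (n : ℕ) :
    ∑ σ : Perm (Fin n), q ^ coxLen σ = ∏ i ∈ Finset.range n, ∑ j ∈ Finset.range (i + 1), q ^ j := by
  induction n with
  | zero => rw [Fintype.sum_subsingleton _ 1, coxLen_one]; simp
  | succ n ih =>
    rw [← Fintype.sum_bijective _ bijective_extendPerm _ _ fun _ => rfl, Fintype.sum_prod_type,
      Finset.prod_range_succ, ← ih, ← Fin.sum_univ_eq_sum_range, mul_comm, Finset.sum_mul_sum]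
    simp [coxLen_extendPerm, pow_add]

end PoincarePolynomial

section HeckeBasis

variable {n : ℕ}

lemma map_adjSwap_mul {H : Type*} [Monoid H] {T : Perm (Fin n) → H} (hT1 : T 1 = 1)
    (hT : ∀ σ (i : ℕ) (hi : i + 1 < n), coxLen (σ * adjSwap i hi) = coxLen σ + 1 →
      T (σ * adjSwap i hi) = T σ * T (adjSwap i hi))
    (σ : Perm (Fin n)) {i : ℕ} (hi : i + 1 < n)
    (h : coxLen (adjSwap i hi * σ) = coxLen σ + 1) :
    T (adjSwap i hi * σ) = T (adjSwap i hi) * T σ := by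
  induction σ using coxLen_induction generalizing i with
  | one => rw [mul_one, hT1, mul_one]
  | mul_adjSwap τ j hj hτ ih =>
    have hcases := coxLen_adjSwap_mul τ i hi
    have hcases' := coxLen_mul_adjSwap (adjSwap i hi * τ) j hj
    rw [← mul_assoc] at h ⊢
    have hiτ : coxLen (adjSwap i hi * τ) = coxLen τ + 1 := by omega
    rw [hT _ j hj (by omega), ih hi hiτ, mul_assoc, ← hT τ j hj hτ]

lemma sum_eq_map_adjSwap_add_one_mul {H : Type*} [Semiring H] {T : Perm (Fin n) → H}
    (hT1 : T 1 = 1)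
    (hT : ∀ σ (i : ℕ) (hi : i + 1 < n), coxLen (σ * adjSwap i hi) = coxLen σ + 1 →
      T (σ * adjSwap i hi) = T σ * T (adjSwap i hi))
    {i : ℕ} (hi : i + 1 < n) :
    ∑ σ, T σ = (T (adjSwap i hi) + 1) *
      ∑ σ with coxLen (adjSwap i hi * σ) = coxLen σ + 1, T σ := by
  classical
  set s := adjSwap i hi
  have hswap : ∑ σ with coxLen (s * σ) = coxLen σ + 1, T (s * σ) =
      ∑ σ with ¬coxLen (s * σ) = coxLen σ + 1, T σ := by
    refine Finset.sum_equiv (Equiv.mulLeft s) (fun σ => ?_) fun _ _ => rfl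
    have := coxLen_adjSwap_mul σ i hi
    simp only [Finset.mem_filter, Finset.mem_univ, true_and, Equiv.coe_mulLeft, ← mul_assoc, s,
      adjSwap_mul_self, one_mul]
    omega
  rw [add_mul, one_mul, Finset.mul_sum, ← Finset.sum_filter_add_sum_filter_not _
    fun σ => coxLen (s * σ) = coxLen σ + 1, ← hswap, add_comm]
  congr 1
  exact Finset.sum_congr rfl fun σ hσ =>
    map_adjSwap_mul hT1 hT σ hi (Finset.mem_filter.1 hσ).2

end HeckeBasis

lemma apply_eq_smul_of_mem_range_add_one {k M : Type*} [CommRing k] [AddCommGroup M] [Module k M]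
    {f : Module.End k M} {q : k} (hf : f * f = q • 1 + (q - 1) • f) {m : M}
    (hm : m ∈ LinearMap.range (f + 1)) : f m = q • m := by
  obtain ⟨y, rfl⟩ := hm
  have hy : f (f y) = q • y + (q - 1) • f y := by simpa using LinearMap.congr_fun hf y
  simp only [LinearMap.add_apply, Module.End.one_apply, map_add, hy]
  module

lemma apply_eq_pow_coxLen_smul {k M : Type*} [CommSemiring k] [AddCommMonoid M] [Module k M]
    {n : ℕ} {T : Perm (Fin n) → Module.End k M} (hT1 : T 1 = 1)
    (hT : ∀ σ (i : ℕ) (hi : i + 1 < n), coxLen (σ * adjSwap i hi) = coxLen σ + 1 →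
      T (σ * adjSwap i hi) = T σ * T (adjSwap i hi))
    {q : k} {m : M} (hm : ∀ (i : ℕ) (hi : i + 1 < n), T (adjSwap i hi) m = q • m)
    (σ : Perm (Fin n)) : T σ m = q ^ coxLen σ • m := by
  induction σ using coxLen_induction with
  | one => simp [hT1, coxLen_one]
  | mul_adjSwap τ j hj hτ ih =>
    rw [hT τ j hj hτ, Module.End.mul_apply, hm, map_smul, ih, smul_smul, hτ, pow_succ']

theorem range_q_symmetrizer_general (k : Type*) [Field k] (n : ℕ) (q : k)
    (hfac : (∏ i ∈ Finset.range n, ∑ j ∈ Finset.range (i + 1), q ^ j) ≠ 0)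
    (H : Type*) [Ring H] [Algebra k H] (T : Equiv.Perm (Fin n) → H)
    (hT1 : T 1 = 1)
    (hmul : ∀ (σ : Equiv.Perm (Fin n)) (i : ℕ) (hi : i + 1 < n),
      T σ * T (adjSwap i hi) =
        if coxLen (σ * adjSwap i hi) = coxLen σ + 1 then T (σ * adjSwap i hi)
        else q • T (σ * adjSwap i hi) + (q - 1) • T σ)
    (M : Type*) [AddCommGroup M] [Module k M]
    (μ : H →ₐ[k] Module.End k M)
    (X : H)
    (hX : X = (∏ i ∈ Finset.range n, ∑ j ∈ Finset.range (i + 1), q ^ j)⁻¹ •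
        ∑ σ : Equiv.Perm (Fin n), T σ) :
    LinearMap.range (μ X) =
      ⨅ i : {i : ℕ // i + 1 < n},
        LinearMap.range (μ (T (adjSwap i.1 i.2)) + 1) := by
  have hT : ∀ σ (i : ℕ) (hi : i + 1 < n), coxLen (σ * adjSwap i hi) = coxLen σ + 1 →
      T (σ * adjSwap i hi) = T σ * T (adjSwap i hi) := fun σ i hi h => by rw [hmul, if_pos h]
  apply le_antisymm
  · refine le_iInf fun ⟨i, hi⟩ => ?_
    rw [hX, sum_eq_map_adjSwap_add_one_mul hT1 hT hi, ← mul_smul_comm, map_mul, map_add, map_one,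
      Module.End.mul_eq_comp]
    exact LinearMap.range_comp_le_range _ _
  · intro m hm
    have hfix : ∀ (i : ℕ) (hi : i + 1 < n), μ (T (adjSwap i hi)) m = q • m := by
      intro i hi
      have hsq := hmul (adjSwap i hi) i hi
      rw [adjSwap_mul_self, hT1, coxLen_one, if_neg (by omega)] at hsq
      refine apply_eq_smul_of_mem_range_add_one ?_ ((Submodule.mem_iInf _).1 hm ⟨i, hi⟩)
      rw [← map_mul, hsq, map_add, map_smul, map_smul, map_one]
    have hsum : μ (∑ σ, T σ) m =
        (∏ i ∈ Finset.range n, ∑ j ∈ Finset.range (i + 1), q ^ j) • m := by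
      rw [map_sum, LinearMap.sum_apply, ← sum_pow_coxLen, Finset.sum_smul]
      exact Finset.sum_congr rfl fun σ _ => apply_eq_pow_coxLen_smul (T := fun σ => μ (T σ))
        (by rw [hT1, map_one]) (fun σ i hi h => by rw [hT σ i hi h, map_mul]) hfix σ
    exact ⟨m, by rw [hX, map_smul, LinearMap.smul_apply, hsum, smul_smul, inv_mul_cancel₀ hfac,
      one_smul]⟩

theorem range_q_symmetrizer (k : Type*) [Field k] (n : ℕ) (q : k) (hq : q ≠ 0)
    (hfac : (∏ i ∈ Finset.range n, ∑ j ∈ Finset.range (i + 1), q ^ j) ≠ 0)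
    (H : Type*) [Ring H] [Algebra k H] (T : Equiv.Perm (Fin n) → H)
    (hT1 : T 1 = 1)
    (hmul : ∀ (σ : Equiv.Perm (Fin n)) (i : ℕ) (hi : i + 1 < n),
      T σ * T (adjSwap i hi) =
        if coxLen (σ * adjSwap i hi) = coxLen σ + 1 then T (σ * adjSwap i hi)
        else q • T (σ * adjSwap i hi) + (q - 1) • T σ)
    (M : Type*) [AddCommGroup M] [Module k M]
    (μ : H →ₐ[k] Module.End k M)
    (X : H)
    (hX : X = (∏ i ∈ Finset.range n, ∑ j ∈ Finset.range (i + 1), q ^ j)⁻¹ •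
        ∑ σ : Equiv.Perm (Fin n), T σ) :
    LinearMap.range (μ X) =
      ⨅ i : {i : ℕ // i + 1 < n},
        LinearMap.range (μ (T (adjSwap i.1 i.2)) + 1) :=
  range_q_symmetrizer_general k n q hfac H T hT1 hmul M μ X hX
end

section
/- Let B be a superbialgebra and V, U finite-dimensional right B-supercomodules with supercharacter maps χˢ : End_k(V) → B and χˢ : End_k(U) → B. For f ∈ End_k(V) and g ∈ End_k(U), viewing f ⊗ g as an endomorphism of V ⊗ U via the sign rule (f ⊗ g)(v ⊗ u) = (−1)^{|g||v|} f(v) ⊗ g(u), one has χˢ(f ⊗ g) = χˢ(f)·χˢ(g) in B. -/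
/-!
STATEMENT 6: Let `B` be a superbialgebra and `V, U` finite-dimensional right
`B`-supercomodules.  For homogeneous `f ∈ End_k(V)`, `g ∈ End_k(U)`, viewing `f ⊗ g` as an
endomorphism of `V ⊗ U` via the sign rule `(f ⊗ g)(v ⊗ u) = (-1)^{|g||v|} f(v) ⊗ g(u)`, one
has `χˢ(f ⊗ g) = χˢ(f)·χˢ(g)` in `B`.

Everything is encoded in terms of fixed homogeneous bases: `V` has basis indexed by `I` with
parities `pI`, coaction matrix `bV : I → I → B` (with `δ(x_j) = Σ_i x_i ⊗ bV i j`), and an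
endomorphism `f` of parity `pf` with scalar matrix `F` (so `F i j = 0` unless
`|i| + |j| = |f|`); similarly for `U`.  The supercharacter is
`χˢ(f) = Σ_{i,j} (-1)^{|i||j|} b^i_j F^j_i`.  On `V ⊗ U`, the coaction matrix is
`Ψ^{(i,ℓ)}_{(j,m)} = (-1)^{(|i|+|j|)|ℓ|} bV i j · bU ℓ m` (the sign from moving the
coefficient past `y_ℓ`), the matrix of `f ⊗ g` is
`Φ^{(i,ℓ)}_{(j,m)} = (-1)^{|g||j|} F i j · G ℓ m`, and the parity of `x_i ⊗ y_ℓ` is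
`|i| + |ℓ|`.
-/

/-- The sign `(-1)^{ab}` for parities `a, b ∈ ℤ/2` (encoded as booleans). -/
def psign (k : Type*) [Field k] (a b : Bool) : k := if a && b then -1 else 1

/-- The supercharacter `χˢ(f) = Σ_{i,j} (-1)^{|i||j|} b^i_j F^j_i` of an endomorphism with
scalar matrix `F` of a finite-dimensional supercomodule with coaction matrix `b` and basis
parities `par`. -/
noncomputable def superChar (k B : Type*) [Field k] [Ring B] [Algebra k B]
    {I : Type*} [Fintype I] (par : I → Bool) (b : I → I → B) (F : I → I → k) : B :=
  ∑ i : I, ∑ j : I, (psign k (par i) (par j) * F j i) • b i j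

lemma psign_key (k : Type*) [Field k] (a b c d : Bool) :
    psign k (xor a c) (xor b d) * (psign k (xor c d) a) * (psign k (xor a b) c)
      = psign k a b * psign k c d := by
  rcases a <;> rcases b <;> rcases c <;> rcases d <;> simp [psign]

theorem superChar_tensor_mul (k B : Type*) [Field k] [Ring B] [Algebra k B]
    (I J : Type*) [Fintype I] [Fintype J]
    (pI : I → Bool) (pJ : J → Bool)
    (bV : I → I → B) (bU : J → J → B)
    (F : I → I → k) (G : J → J → k) (pf pg : Bool)
    (hF : ∀ i j : I, xor (pI i) (pI j) ≠ pf → F i j = 0)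
    (hG : ∀ l m : J, xor (pJ l) (pJ m) ≠ pg → G l m = 0) :
    superChar k B (fun x : I × J => xor (pI x.1) (pJ x.2))
        (fun x y : I × J =>
          psign k (xor (pI x.1) (pI y.1)) (pJ x.2) • (bV x.1 y.1 * bU x.2 y.2))
        (fun x y : I × J => psign k pg (pI y.1) * F x.1 y.1 * G x.2 y.2)
      = superChar k B pI bV F * superChar k B pJ bU G := by
  unfold superChar
  simp only [Fintype.sum_prod_type]
  simp only [Finset.sum_mul]
  simp only [Finset.mul_sum]
  refine Finset.sum_congr rfl fun i _ => ?_
  rw [Finset.sum_comm]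
  refine Finset.sum_congr rfl fun j _ => Finset.sum_congr rfl fun l _ =>
    Finset.sum_congr rfl fun m _ => ?_
  by_cases hFji : F j i = 0
  · simp [hFji]
  by_cases hGml : G m l = 0
  · simp [hGml]
  have hpf : xor (pI j) (pI i) = pf := by
    by_contra h; exact hFji (hF j i h)
  have hpg : xor (pJ m) (pJ l) = pg := by
    by_contra h; exact hGml (hG m l h)
  rw [smul_smul, smul_mul_smul_comm]
  congr 1
  have key := psign_key k (pI i) (pI j) (pJ l) (pJ m)
  rw [← hpg, Bool.xor_comm (pJ m) (pJ l)] at *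
  calc psign k (xor (pI i) (pJ l)) (xor (pI j) (pJ m)) *
        (psign k (xor (pJ l) (pJ m)) (pI i) * F j i * G m l) *
        psign k (xor (pI i) (pI j)) (pJ l)
      = (psign k (xor (pI i) (pJ l)) (xor (pI j) (pJ m)) *
        psign k (xor (pJ l) (pJ m)) (pI i) *
        psign k (xor (pI i) (pI j)) (pJ l)) * (F j i * G m l) := by ring
    _ = (psign k (pI i) (pI j) * psign k (pJ l) (pJ m)) * (F j i * G m l) := by rw [key]
    _ = psign k (pI i) (pI j) * F j i * (psign k (pJ l) (pJ m) * G m l) := by ring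
end

section
/- Let Φ = [[A, B],[C, D]] be an invertible supermatrix in standard form over a supercommutative superalgebra R (A a p×p matrix and D a q×q matrix over R₀, B and C matrices over R₁, with A and D invertible). Then the Berezinian satisfies det(A)·det(D − C A^{−1} B)^{−1} = det(D)^{−1}·det(A − B D^{−1} C), i.e., the two standard formulas for ber(Φ) agree. -/
/-!
With `X = A⁻¹ B D⁻¹` and `Y = C`, both odd, one has `A - B D⁻¹ C = A (1 - X Y)` and
`D - C A⁻¹ B = (1 - Y X) D`, so the claim is `det (1 - X Y) * det (1 - Y X) = 1`, the odd
counterpart of Sylvester's identity `det (1 - X Y) = det (1 - Y X)`.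

This is proved by induction on the number of columns of `X`. Splitting off the last column `u`
of `X = [X' | u]` and the last row `v` of `Y`, the factorisation
`1 - X Y = (1 - X' Y') (1 - u₁ v)` with `u₁ = (1 - X' Y')⁻¹ u`, the Schur complement of
`1 - Y' X'` in `1 - Y X`, and the push-through identity
`(1 - X' Y')⁻¹ = 1 + X' (1 - Y' X')⁻¹ Y'` reduce the claim to the pairs `(X', Y')` and
`(u₁, v)`. The rank-one case reduces in the same way, with the roles of `X` and `Y` exchanged,
to `1 × 1` matrices, where `(1 - x y) (1 - y x) = 1 - (x y) ^ 2 = 1` because `y x = - x y` and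
`y ^ 2 = 0`.
-/

open Matrix

namespace Matrix

variable {m n S : Type*} [Fintype m] [Fintype n] [DecidableEq m] [DecidableEq n] [CommRing S]

theorem det_one_sub_eq_mul_det_one_sub_inv_mul {U U' : Matrix m m S}
    (h : IsUnit (1 - U').det) :
    (1 - U).det = (1 - U').det * (1 - (1 - U')⁻¹ * (U - U')).det := by
  rw [← det_mul, mul_sub, mul_one, ← Matrix.mul_assoc, mul_nonsing_inv _ h, Matrix.one_mul,
    sub_sub, add_sub_cancel]

theorem det_one_sub_eq_mul_det_one_sub_schur (V : Matrix (m ⊕ n) (m ⊕ n) S)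
    (h : IsUnit (1 - V.toBlocks₁₁).det) :
    (1 - V).det = (1 - V.toBlocks₁₁).det *
      (1 - (V.toBlocks₂₂ + V.toBlocks₂₁ * (1 - V.toBlocks₁₁)⁻¹ * V.toBlocks₁₂)).det := by
  let := invertibleOfIsUnitDet _ h
  have hblocks : 1 - V = fromBlocks (1 - V.toBlocks₁₁) (-V.toBlocks₁₂) (-V.toBlocks₂₁)
      (1 - V.toBlocks₂₂) := by
    conv_lhs => rw [← fromBlocks_toBlocks V, ← fromBlocks_one]
    rw [sub_eq_add_neg, fromBlocks_neg, fromBlocks_add, zero_add, zero_add, ← sub_eq_add_neg,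
      ← sub_eq_add_neg]
  rw [hblocks, det_fromBlocks₁₁, invOf_eq_nonsing_inv, Matrix.neg_mul, Matrix.neg_mul,
    Matrix.mul_neg, neg_neg, sub_sub]

theorem eq_one_add_mul_mul_of_mul_one_sub_mul {R : Type*} [Ring R] {X : Matrix m n R}
    {Y : Matrix n m R} {N₁ : Matrix m m R} {N₂ : Matrix n n R}
    (h₁ : N₁ * (1 - X * Y) = 1) (h₂ : (1 - Y * X) * N₂ = 1) : N₁ = 1 + X * N₂ * Y := by
  have hright : (1 - X * Y) * (1 + X * N₂ * Y) = 1 := by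
    calc (1 - X * Y) * (1 + X * N₂ * Y) = 1 - X * Y + X * ((1 - Y * X) * N₂) * Y := by
          simp only [Matrix.mul_add, Matrix.sub_mul, Matrix.mul_sub, Matrix.one_mul,
            Matrix.mul_one, Matrix.mul_assoc]
      _ = 1 := by rw [h₂, Matrix.mul_one, sub_add_cancel]
  calc N₁ = N₁ * ((1 - X * Y) * (1 + X * N₂ * Y)) := by rw [hright, Matrix.mul_one]
    _ = 1 + X * N₂ * Y := by rw [← Matrix.mul_assoc, h₁, Matrix.one_mul]

theorem map_nonsing_inv_mul_one_sub_map {T : Type*} [Ring T] (f : S →+* T) {U : Matrix m m S}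
    (h : IsUnit (1 - U).det) : (1 - U)⁻¹.map f * (1 - U.map f) = 1 := by
  simpa only [map_mul, map_sub, map_one, RingHom.mapMatrix_apply] using
    congrArg f.mapMatrix (nonsing_inv_mul _ h)

theorem one_sub_map_mul_map_nonsing_inv {T : Type*} [Ring T] (f : S →+* T) {U : Matrix m m S}
    (h : IsUnit (1 - U).det) : (1 - U.map f) * (1 - U)⁻¹.map f = 1 := by
  simpa only [map_mul, map_sub, map_one, RingHom.mapMatrix_apply] using
    congrArg f.mapMatrix (mul_nonsing_inv _ h)

end Matrix

section Super

variable {S R : Type*} [CommRing S] [Ring R] [Algebra S R]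

structure IsOddPart (O : Submodule S R) : Prop where
  mul_anticomm : ∀ a ∈ O, ∀ b ∈ O, a * b = -(b * a)
  mul_self : ∀ a ∈ O, a * a = 0
  mul_mem_range : ∀ a ∈ O, ∀ b ∈ O, a * b ∈ (algebraMap S R).range
  injective : Function.Injective (algebraMap S R)

variable {O : Submodule S R} {m n k : Type*} [Fintype n]

theorem map_mul_mem_matrix (N : Matrix m n S) {M : Matrix n k R} (hM : M ∈ O.matrix) :
    N.map (algebraMap S R) * M ∈ O.matrix := fun i j =>
  Submodule.sum_mem _ fun l _ => by
    simpa only [map_apply, ← Algebra.smul_def] using O.smul_mem (N i l) (hM l j)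

theorem mul_map_mem_matrix {M : Matrix m n R} (N : Matrix n k S) (hM : M ∈ O.matrix) :
    M * N.map (algebraMap S R) ∈ O.matrix := fun i j =>
  Submodule.sum_mem _ fun l _ => by
    simpa only [map_apply, ← Algebra.commutes, ← Algebra.smul_def] using
      O.smul_mem (N l j) (hM i l)

theorem IsOddPart.exists_map_eq_mul (hO : IsOddPart O) {X : Matrix m n R} {Y : Matrix n k R}
    (hX : X ∈ O.matrix) (hY : Y ∈ O.matrix) :
    ∃ U : Matrix m k S, U.map (algebraMap S R) = X * Y := by
  choose U hU using fun i j =>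
    Subring.sum_mem _ fun l (_ : l ∈ Finset.univ) => hO.mul_mem_range _ (hX i l) _ (hY l j)
  exact ⟨Matrix.of U, by ext i j; exact hU i j⟩

theorem IsOddPart.one_sub_mul_mul_one_sub_mul (hO : IsOddPart O) {a b : R} (ha : a ∈ O)
    (hb : b ∈ O) : (1 - a * b) * (1 - b * a) = 1 := by
  have hsq : a * b * (a * b) = 0 := by
    rw [mul_assoc, ← mul_assoc b, hO.mul_anticomm b hb a ha, neg_mul, mul_neg, mul_assoc,
      hO.mul_self b hb, mul_zero, mul_zero, neg_zero]
  rw [hO.mul_anticomm b hb a ha, sub_neg_eq_add, mul_add, mul_one, sub_mul, one_mul, hsq,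
    sub_zero, sub_add_cancel]

variable [Fintype m] [DecidableEq m] [DecidableEq n]

variable (O m n) in
/-- Odd analogue of `Matrix.det_one_sub_mul_comm`: `det (1 - X * Y) = det (1 - Y * X)⁻¹`, with
the even products `X * Y`, `Y * X` read over `S`. -/
def SuperSylvester : Prop :=
  ∀ X : Matrix m n R, X ∈ O.matrix → ∀ Y : Matrix n m R, Y ∈ O.matrix →
    ∀ (U : Matrix m m S) (V : Matrix n n S),
      U.map (algebraMap S R) = X * Y → V.map (algebraMap S R) = Y * X →
        (1 - U).det * (1 - V).det = 1

theorem SuperSylvester.symm (h : SuperSylvester O m n) : SuperSylvester O n m :=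
  fun X hX Y hY U V hU hV => by rw [mul_comm]; exact h Y hY X hX V U hV hU

theorem SuperSylvester.congr_right {n' : Type*} [Fintype n'] [DecidableEq n'] (e : n ≃ n')
    (h : SuperSylvester O m n) : SuperSylvester O m n' := by
  intro X hX Y hY U V hU hV
  have hXY : X.submatrix id e * Y.submatrix e id = X * Y := by
    rw [submatrix_mul_equiv X Y id e id, submatrix_id_id]
  have hYX : Y.submatrix e id * X.submatrix id e = (Y * X).submatrix e e := by
    simpa using submatrix_mul_equiv Y X e (Equiv.refl m) e
  have := h (X.submatrix id e) (fun i j => hX i (e j)) (Y.submatrix e id) (fun i j => hY (e i) j)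
    U (V.submatrix e e) (hU.trans hXY.symm) (by rw [← submatrix_map, hV, hYX])
  rwa [← submatrix_one_equiv e, show submatrix 1 e e - V.submatrix e e = (1 - V).submatrix e e
    from rfl, det_submatrix_equiv_self] at this

theorem IsOddPart.superSylvester_of_isEmpty (hO : IsOddPart O) [IsEmpty n] :
    SuperSylvester O m n := by
  intro X _ Y _ U V hU _
  have : U = 0 := map_injective hO.injective <|
    show U.map (algebraMap S R) = (0 : Matrix m m S).map _ by rw [hU]; ext; simp [mul_apply]
  rw [this, sub_zero, det_one, det_isEmpty, one_mul]

theorem IsOddPart.superSylvester_unit_unit (hO : IsOddPart O) : SuperSylvester O Unit Unit := by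
  intro X hX Y hY U V hU hV
  apply hO.injective
  have hU' := congr_fun₂ hU default default
  have hV' := congr_fun₂ hV default default
  simp only [map_apply, mul_apply, Finset.univ_unique, Finset.sum_singleton] at hU' hV'
  simp only [det_unique, Matrix.sub_apply, one_apply_eq, map_mul, map_sub, map_one, hU', hV']
  exact hO.one_sub_mul_mul_one_sub_mul (hX () ()) (hY () ())

theorem IsOddPart.superSylvester_sum_unit (hO : IsOddPart O) (h : SuperSylvester O m n)
    (h₁ : SuperSylvester O m Unit) : SuperSylvester O m (n ⊕ Unit) := by
  intro X hX Y hY U V hU hV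
  set X' := X.toCols₁
  set u := X.toCols₂
  set Y' := Y.toRows₁
  set v := Y.toRows₂
  have hX' : X' ∈ O.matrix := fun i j => hX i (.inl j)
  have hu : u ∈ O.matrix := fun i j => hX i (.inr j)
  have hY' : Y' ∈ O.matrix := fun i j => hY (.inl i) j
  have hv : v ∈ O.matrix := fun i j => hY (.inr i) j
  have hXY : X * Y = X' * Y' + u * v := by
    rw [← fromCols_mul_fromRows, fromCols_toCols, fromRows_toRows]
  have hYX : Y * X = fromBlocks (Y' * X') (Y' * u) (v * X') (v * u) := by
    rw [← fromRows_mul_fromCols, fromCols_toCols, fromRows_toRows]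
  have hVblocks : V.map (algebraMap S R) = fromBlocks (Y' * X') (Y' * u) (v * X') (v * u) :=
    hV.trans hYX
  rw [← fromBlocks_toBlocks V, fromBlocks_map, fromBlocks_inj] at hVblocks
  obtain ⟨hV₁₁, hV₁₂, hV₂₁, hV₂₂⟩ := hVblocks
  obtain ⟨U', hU'⟩ := hO.exists_map_eq_mul hX' hY'
  have hdet' := h X' hX' Y' hY' U' V.toBlocks₁₁ hU' hV₁₁
  have hU'unit : IsUnit (1 - U').det := .of_mul_eq_one _ hdet'
  have hV'unit : IsUnit (1 - V.toBlocks₁₁).det := .of_mul_eq_one_right _ hdet'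
  set u₁ := ((1 - U')⁻¹).map (algebraMap S R) * u
  have hpush : ((1 - U')⁻¹).map (algebraMap S R) =
      1 + X' * ((1 - V.toBlocks₁₁)⁻¹).map (algebraMap S R) * Y' := by
    refine eq_one_add_mul_mul_of_mul_one_sub_mul ?_ ?_
    · rw [← hU']; exact map_nonsing_inv_mul_one_sub_map _ hU'unit
    · rw [← hV₁₁]; exact one_sub_map_mul_map_nonsing_inv _ hV'unit
  have hU₁ : ((1 - U')⁻¹ * (U - U')).map (algebraMap S R) = u₁ * v := by
    rw [Matrix.map_mul, Matrix.map_sub _ (map_sub _), hU, hU', hXY, add_sub_cancel_left,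
      Matrix.mul_assoc]
  have hV₁ : (V.toBlocks₂₂ + V.toBlocks₂₁ * (1 - V.toBlocks₁₁)⁻¹ * V.toBlocks₁₂).map
      (algebraMap S R) = v * u₁ := by
    rw [Matrix.map_add _ (map_add _), Matrix.map_mul, Matrix.map_mul, hV₂₂, hV₂₁, hV₁₂]
    simp only [u₁, hpush, Matrix.mul_add, Matrix.add_mul, Matrix.one_mul, Matrix.mul_assoc]
  rw [det_one_sub_eq_mul_det_one_sub_inv_mul hU'unit,
    det_one_sub_eq_mul_det_one_sub_schur V hV'unit, mul_mul_mul_comm, hdet',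
    h₁ u₁ (map_mul_mem_matrix _ hu) v hv _ _ hU₁ hV₁, one_mul]

theorem IsOddPart.superSylvester_fin_of_unit (hO : IsOddPart O) (h₁ : SuperSylvester O m Unit) :
    ∀ q : ℕ, SuperSylvester O m (Fin q)
  | 0 => hO.superSylvester_of_isEmpty
  | q + 1 => ((hO.superSylvester_sum_unit (hO.superSylvester_fin_of_unit h₁ q) h₁).congr_right
      ((Equiv.sumCongr (Equiv.refl _) (Equiv.ofUnique Unit (Fin 1))).trans finSumFinEquiv))

theorem IsOddPart.superSylvester (hO : IsOddPart O) : SuperSylvester O m n := by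
  have hcol (p : ℕ) : SuperSylvester O (Fin p) Unit :=
    (hO.superSylvester_fin_of_unit hO.superSylvester_unit_unit p).symm
  have hfin (p q : ℕ) : SuperSylvester O (Fin p) (Fin q) := hO.superSylvester_fin_of_unit (hcol p) q
  exact (((hfin _ _).congr_right (Fintype.equivFin n).symm).symm.congr_right
    (Fintype.equivFin m).symm).symm

end Super

theorem berezinian_two_formulas_agree_general (S R : Type*) [CommRing S] [Ring R] [Algebra S R]
    (O : Submodule S R)
    (hanti : ∀ a ∈ O, ∀ b ∈ O, a * b = -(b * a))
    (hsq : ∀ a ∈ O, a * a = 0)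
    (hOO : ∀ a ∈ O, ∀ b ∈ O, a * b ∈ (algebraMap S R).range)
    (hinj : Function.Injective (algebraMap S R))
    (p q : ℕ)
    (A : Matrix (Fin p) (Fin p) S) (D : Matrix (Fin q) (Fin q) S)
    (Bm : Matrix (Fin p) (Fin q) R) (Cm : Matrix (Fin q) (Fin p) R)
    (hB : ∀ i j, Bm i j ∈ O) (hC : ∀ i j, Cm i j ∈ O)
    (hA : IsUnit A.det) (hD : IsUnit D.det)
    (Q : Matrix (Fin q) (Fin q) S) (P : Matrix (Fin p) (Fin p) S)
    (hQ : Q.map (algebraMap S R) = Cm * (A⁻¹).map (algebraMap S R) * Bm)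
    (hP : P.map (algebraMap S R) = Bm * (D⁻¹).map (algebraMap S R) * Cm) :
    A.det * Ring.inverse (D - Q).det = Ring.inverse D.det * (A - P).det := by
  set X := (A⁻¹).map (algebraMap S R) * Bm * (D⁻¹).map (algebraMap S R)
  have hX : X ∈ O.matrix := mul_map_mem_matrix _ (map_mul_mem_matrix _ hB)
  have hU : (A⁻¹ * P).map (algebraMap S R) = X * Cm := by
    simp only [Matrix.map_mul, hP, X, Matrix.mul_assoc]
  have hV : (Q * D⁻¹).map (algebraMap S R) = Cm * X := by
    simp only [Matrix.map_mul, hQ, X, Matrix.mul_assoc]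
  have key := (IsOddPart.mk hanti hsq hOO hinj).superSylvester X hX Cm hC _ _ hU hV
  have hAP : A - P = A * (1 - A⁻¹ * P) := by
    rw [Matrix.mul_sub, Matrix.mul_one, ← Matrix.mul_assoc, mul_nonsing_inv _ hA, Matrix.one_mul]
  have hDQ : D - Q = (1 - Q * D⁻¹) * D := by
    rw [Matrix.sub_mul, Matrix.one_mul, Matrix.mul_assoc, nonsing_inv_mul _ hD, Matrix.mul_one]
  have hinv : Ring.inverse (1 - Q * D⁻¹).det = (1 - A⁻¹ * P).det := by
    rw [← mul_one (Ring.inverse _), Ring.inverse_mul_eq_iff_eq_mul _ _ _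
      (.of_mul_eq_one_right _ key), mul_comm, key]
  rw [hAP, hDQ, det_mul, det_mul, Ring.mul_inverse_rev, hinv]
  ring

theorem berezinian_two_formulas_agree (S R : Type*) [CommRing S] [Ring R] [Algebra S R]
    (O : Submodule S R)
    (hanti : ∀ a ∈ O, ∀ b ∈ O, a * b = -(b * a))
    (hsq : ∀ a ∈ O, a * a = 0)
    (hOO : ∀ a ∈ O, ∀ b ∈ O, a * b ∈ (algebraMap S R).range)
    (hinj : Function.Injective (algebraMap S R))
    (p q : ℕ)
    (A : Matrix (Fin p) (Fin p) S) (D : Matrix (Fin q) (Fin q) S)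
    (Bm : Matrix (Fin p) (Fin q) R) (Cm : Matrix (Fin q) (Fin p) R)
    (hB : ∀ i j, Bm i j ∈ O) (hC : ∀ i j, Cm i j ∈ O)
    (hA : IsUnit A.det) (hD : IsUnit D.det)
    (Q : Matrix (Fin q) (Fin q) S) (P : Matrix (Fin p) (Fin p) S)
    (hQ : Q.map (algebraMap S R) = Cm * (A⁻¹).map (algebraMap S R) * Bm)
    (hP : P.map (algebraMap S R) = Bm * (D⁻¹).map (algebraMap S R) * Cm)
    (hDQ : IsUnit (D - Q).det) (hAP : IsUnit (A - P).det) :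
    A.det * Ring.inverse (D - Q).det = Ring.inverse D.det * (A - P).det :=
  berezinian_two_formulas_agree_general S R O hanti hsq hOO hinj p q A D Bm Cm hB hC hA hD Q P hQ hP
end
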